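/- arXiv:2402.09877 — 11 statements merged into one kernel-verified Lean document; each statement's English description precedes it below -/
import Mathlib

section
/- Let P be a type and c, d : P → ℝ. Suppose there exists C⁻ > 0 such that for all x, y ∈ P, if c x ≠ c y then C⁻ ≤ |c x − c y|, and there exists D⁺ > 0 such that for all x, y ∈ P, |d x − d y| < D⁺. Set ω = C⁻ / D⁺. Then for all x, y ∈ P: c x + ω·d x ≤ c y + ω·d y if and only if x ≼_{c,d} y. -/
/-- Lexicographic order ≼_{c,d}: first cost, then dispersion. -/
def LexCD {P : Type*} (c d : P → ℝ) (x y : P) : Prop :=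
  c x < c y ∨ (c x = c y ∧ d x ≤ d y)

theorem weighted_sum_iff_lex_cd {P : Type*} (c d : P → ℝ)
    (Cminus : ℝ) (hC : 0 < Cminus)
    (hc : ∀ x y : P, c x ≠ c y → Cminus ≤ |c x - c y|)
    (Dplus : ℝ) (hD : 0 < Dplus)
    (hd : ∀ x y : P, |d x - d y| < Dplus)
    (ω : ℝ) (hω : ω = Cminus / Dplus) :
    ∀ x y : P, c x + ω * d x ≤ c y + ω * d y ↔ LexCD c d x y := by
  have hωpos : 0 < ω := by rw [hω]; positivity
  have key : ∀ x y : P, ω * (d x - d y) < Cminus := by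
    intro x y
    have h1 : ω * (d x - d y) ≤ ω * |d x - d y| :=
      mul_le_mul_of_nonneg_left (le_abs_self _) hωpos.le
    have h2 : ω * |d x - d y| < ω * Dplus :=
      mul_lt_mul_of_pos_left (hd x y) hωpos
    have h3 : ω * Dplus = Cminus := by
      rw [hω]; field_simp
    linarith
  intro x y
  constructor
  · intro h
    rcases lt_trichotomy (c x) (c y) with hlt | heq | hgt
    · exact Or.inl hlt
    · refine Or.inr ⟨heq, ?_⟩
      nlinarith
    · exfalso
      have hne : c x ≠ c y := ne_of_gt hgt
      have := hc x y hne
      rw [abs_of_pos (by linarith : (0:ℝ) < c x - c y)] at this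
      have := key y x
      linarith
  · rintro (hlt | ⟨heq, hle⟩)
    · have hne : c x ≠ c y := ne_of_lt hlt
      have := hc x y hne
      rw [abs_of_neg (by linarith : c x - c y < 0)] at this
      have := key x y
      linarith
    · nlinarith
end

section
/- Let P be a type and c, d : P → ℝ. Suppose there exists C⁻ > 0 such that for all x, y ∈ P, if c x ≠ c y then C⁻ ≤ |c x − c y|, and there exists D⁺ > 0 such that for all x, y ∈ P, |d x − d y| < D⁺. Set ω = C⁻ / D⁺. Then for all x, y ∈ P: c x + ω·d x < c y + ω·d y if and only if c x < c y, or c x = c y and d x < d y. -/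
theorem weighted_sum_lt_iff_lex_strict {P : Type*} (c d : P → ℝ)
    (Cminus : ℝ) (hC : 0 < Cminus)
    (hc : ∀ x y : P, c x ≠ c y → Cminus ≤ |c x - c y|)
    (Dplus : ℝ) (hD : 0 < Dplus)
    (hd : ∀ x y : P, |d x - d y| < Dplus)
    (ω : ℝ) (hω : ω = Cminus / Dplus) :
    ∀ x y : P, c x + ω * d x < c y + ω * d y ↔
      (c x < c y ∨ (c x = c y ∧ d x < d y)) := by
  have hωpos : 0 < ω := by rw [hω]; positivity
  have key : ∀ x y : P, c x < c y → c x + ω * d x < c y + ω * d y := by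
    intro x y hxy
    have h1 : Cminus ≤ c y - c x := by
      have := hc x y (ne_of_lt hxy)
      rwa [abs_sub_comm, abs_of_pos (by linarith)] at this
    have h2 : ω * (d x - d y) < ω * Dplus := by
      calc ω * (d x - d y) ≤ ω * |d x - d y| := by
            have := le_abs_self (d x - d y); nlinarith
        _ < ω * Dplus := by
            exact mul_lt_mul_of_pos_left (hd x y) hωpos
    have h3 : ω * Dplus = Cminus := by
      rw [hω]; field_simp
    nlinarith
  intro x y
  constructor
  · intro h
    rcases lt_trichotomy (c x) (c y) with h1 | h1 | h1
    · exact Or.inl h1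
    · refine Or.inr ⟨h1, ?_⟩
      rw [h1] at h
      have := (mul_lt_mul_iff_right₀ hωpos).mp (by linarith : ω * d x < ω * d y)
      exact this
    · exact absurd (key y x h1) (by linarith)
  · rintro (h | ⟨h1, h2⟩)
    · exact key x y h
    · rw [h1]
      have := mul_lt_mul_of_pos_left h2 hωpos
      linarith
end

section
/- Let P be a type, c : P → ℤ an integer-valued cost function, d : P → ℝ, and ω : ℝ with 0 < ω. Suppose that for all x, y ∈ P, ω·|d x − d y| < 1. Then for all x, y ∈ P: (c x : ℝ) + ω·d x ≤ (c y : ℝ) + ω·d y if and only if x ≼_{c,d} y. -/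
theorem weighted_sum_iff_lex_int_costs {P : Type*} (c : P → ℤ) (d : P → ℝ)
    (ω : ℝ) (hω : 0 < ω)
    (hd : ∀ x y : P, ω * |d x - d y| < 1) :
    ∀ x y : P, (c x : ℝ) + ω * d x ≤ (c y : ℝ) + ω * d y ↔
      (c x < c y ∨ (c x = c y ∧ d x ≤ d y)) := by
  intro x y
  have habs := hd x y
  have h1 : ω * (d x - d y) < 1 := lt_of_le_of_lt (by
    have := le_abs_self (d x - d y); nlinarith) habs
  have h2 : -1 < ω * (d x - d y) := by
    have := neg_abs_le (d x - d y); nlinarith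
  constructor
  · intro h
    rcases lt_trichotomy (c x) (c y) with hc | hc | hc
    · exact Or.inl hc
    · refine Or.inr ⟨hc, ?_⟩
      have : (c x : ℝ) = c y := by exact_mod_cast hc
      nlinarith
    · exfalso
      have : (c y : ℝ) + 1 ≤ c x := by exact_mod_cast hc
      nlinarith
  · rintro (hc | ⟨hc, hdle⟩)
    · have : (c x : ℝ) + 1 ≤ c y := by exact_mod_cast hc
      nlinarith
    · have : (c x : ℝ) = c y := by exact_mod_cast hc
      nlinarith
end

section
/- Let P be a type and c, d : P → ℝ. Suppose there exists C⁻ > 0 such that for all x, y ∈ P, if c x ≠ c y then C⁻ ≤ |c x − c y|, and there exists D⁺ > 0 such that for all x, y ∈ P, |d x − d y| < D⁺. Set ω = C⁻ / D⁺. Then an element x ∈ P minimizes the function c + ω·d over P (i.e., c x + ω·d x ≤ c y + ω·d y for all y) if and only if x is minimal with respect to ≼_{c,d} (i.e., x ≼_{c,d} y for all y ∈ P). -/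
theorem minimizer_iff_lex_minimal {P : Type*} (c d : P → ℝ)
    (Cminus : ℝ) (hC : 0 < Cminus)
    (hc : ∀ x y : P, c x ≠ c y → Cminus ≤ |c x - c y|)
    (Dplus : ℝ) (hD : 0 < Dplus)
    (hd : ∀ x y : P, |d x - d y| < Dplus)
    (ω : ℝ) (hω : ω = Cminus / Dplus) :
    ∀ x : P, (∀ y : P, c x + ω * d x ≤ c y + ω * d y) ↔
      (∀ y : P, LexCD c d x y) := by
  have hωpos : 0 < ω := by rw [hω]; positivity
  have key : ∀ a b : P, ω * |d a - d b| < Cminus := by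
    intro a b
    have := hd a b
    calc ω * |d a - d b| < ω * Dplus := by
          exact mul_lt_mul_of_pos_left this hωpos
      _ = Cminus := by rw [hω]; field_simp
  intro x
  constructor
  · intro h y
    rcases lt_trichotomy (c x) (c y) with hlt | heq | hgt
    · exact Or.inl hlt
    · refine Or.inr ⟨heq, ?_⟩
      have := h y
      rw [heq] at this
      have := le_of_add_le_add_left this
      exact le_of_mul_le_mul_left this hωpos
    · exfalso
      have h1 : Cminus ≤ |c x - c y| := hc x y (ne_of_gt hgt)
      have h2 : |c x - c y| = c x - c y := abs_of_pos (by linarith)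
      have h3 := h y
      have h4 : c x - c y ≤ ω * (d y - d x) := by linarith
      have h5 : ω * (d y - d x) ≤ ω * |d y - d x| :=
        mul_le_mul_of_nonneg_left (le_abs_self _) hωpos.le
      have h6 := key y x
      linarith
  · intro h y
    rcases h y with hlt | ⟨heq, hle⟩
    · have h1 : Cminus ≤ |c x - c y| := hc x y (ne_of_lt hlt)
      have h2 : |c x - c y| = c y - c x := by
        rw [abs_of_neg (by linarith)]; ring
      have h5 : ω * (d x - d y) ≤ ω * |d x - d y| :=
        mul_le_mul_of_nonneg_left (le_abs_self _) hωpos.le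
      have h6 := key x y
      linarith
    · have : ω * d x ≤ ω * d y := mul_le_mul_of_nonneg_left hle hωpos.le
      linarith [heq.le, this]
end

section
/- Let P be a type, c : P → ℝ, d : P → ℤ, and let C⁺ : ℝ satisfy |c x − c y| ≤ C⁺ for all x, y ∈ P. Let ω : ℝ with ω > C⁺. Then an element x ∈ P minimizes the function c + ω·d over P (i.e., c x + ω·(d x : ℝ) ≤ c y + ω·(d y : ℝ) for all y) if and only if x is minimal with respect to ≼_{d,c} (i.e., for all y ∈ P, either d x < d y, or d x = d y and c x ≤ c y). -/
theorem minimizer_iff_lex_dc_minimal {P : Type*} (c : P → ℝ) (d : P → ℤ)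
    (Cplus : ℝ) (hC : ∀ x y : P, |c x - c y| ≤ Cplus)
    (ω : ℝ) (hω : Cplus < ω) :
    ∀ x : P, (∀ y : P, c x + ω * (d x : ℝ) ≤ c y + ω * (d y : ℝ)) ↔
      (∀ y : P, d x < d y ∨ (d x = d y ∧ c x ≤ c y)) := by
  intro x
  have hω0 : 0 < ω := lt_of_le_of_lt (le_trans (abs_nonneg _) (hC x x)) hω
  constructor
  · intro h y
    have hy := h y
    rcases lt_trichotomy (d x) (d y) with hd | hd | hd
    · exact Or.inl hd
    · refine Or.inr ⟨hd, ?_⟩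
      rw [hd] at hy
      linarith
    · -- contradiction: d y < d x
      exfalso
      have h1 : (d y : ℝ) + 1 ≤ (d x : ℝ) := by exact_mod_cast hd
      have h2 : c y - c x ≤ Cplus := le_trans (le_abs_self _) (hC y x)
      have h3 : ω * ((d x : ℝ) - (d y : ℝ)) ≥ ω * 1 := by
        apply mul_le_mul_of_nonneg_left _ hω0.le
        linarith
      nlinarith
  · intro h y
    rcases h y with hd | ⟨hd, hc⟩
    · have h1 : (d x : ℝ) + 1 ≤ (d y : ℝ) := by exact_mod_cast hd
      have h2 : c x - c y ≤ Cplus := le_trans (le_abs_self _) (hC x y)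
      nlinarith
    · rw [hd]
      linarith
end

section
/- Fix ω : ℕ. For every list l of natural numbers and every finite set s₀ of natural numbers, the first component of l.foldl (fun p x => (p.1 + x + (if x ∈ p.2 then 0 else ω), insert x p.2)) (0, s₀) equals l.sum + ω * (l.toFinset \ s₀).card. In particular, starting from s₀ = ∅, processing a cost list left to right, where each cost x contributes x plus an extra penalty ω the first time x occurs, yields total l.sum + ω * l.toFinset.card. -/
private lemma foldl_aux (ω : ℕ) :
    ∀ (l : List ℕ) (a : ℕ) (s : Finset ℕ),
      (l.foldl (fun p x => (p.1 + x + (if x ∈ p.2 then 0 else ω), insert x p.2))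
        (a, s)).1 = a + l.sum + ω * (l.toFinset \ s).card := by
  intro l
  induction l with
  | nil => simp
  | cons x l ih =>
    intro a s
    simp only [List.foldl_cons, List.sum_cons, List.toFinset_cons, ih]
    by_cases hx : x ∈ s
    · have h1 : l.toFinset \ insert x s = l.toFinset \ s := by
        rw [Finset.insert_eq_self.mpr hx]
      have h2 : insert x l.toFinset \ s = l.toFinset \ s := by
        rw [Finset.insert_sdiff_of_mem _ hx]
      rw [if_pos hx, h1, h2]; ring
    · have h1 : l.toFinset \ insert x s = (l.toFinset \ s).erase x := by
        ext y; simp [Finset.mem_sdiff, Finset.mem_erase, Finset.mem_insert]; tauto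
      have h2 : insert x l.toFinset \ s = insert x (l.toFinset \ s) := by
        ext y; simp [Finset.mem_sdiff, Finset.mem_insert]; aesop
      have h3 : insert x (l.toFinset \ s) = insert x ((l.toFinset \ s).erase x) := by
        ext y; simp; tauto
      have h4 : (insert x l.toFinset \ s).card = (l.toFinset \ insert x s).card + 1 := by
        rw [h2, h3, h1, Finset.card_insert_of_notMem (Finset.notMem_erase _ _)]
      rw [if_neg hx, h4]; ring

theorem compiled_cost_eq_cost_add_numDifferentCosts (ω : ℕ) :
    (∀ (l : List ℕ) (s₀ : Finset ℕ),
      (l.foldl (fun p x => (p.1 + x + (if x ∈ p.2 then 0 else ω), insert x p.2))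
        (0, s₀)).1 = l.sum + ω * (l.toFinset \ s₀).card) ∧
    (∀ l : List ℕ,
      (l.foldl (fun p x => (p.1 + x + (if x ∈ p.2 then 0 else ω), insert x p.2))
        ((0 : ℕ), (∅ : Finset ℕ))).1 = l.sum + ω * l.toFinset.card) := by
  constructor
  · intro l s₀; simpa using foldl_aux ω l 0 s₀
  · intro l; simpa using foldl_aux ω l 0 ∅
end

section
/- Let S and A be types with an applicability predicate app : A → S → Prop, a successor function succ : A → S → S, and a cost function cost : A → ℕ. Define the augmented system on S × Finset ℕ by app' a (s, u) = app a s and succ' a (s, u) = (succ a s, insert (cost a) u). Then for every list of actions π, every state s, and every finite set u₀ of naturals: π is executable from s in the base system if and only if π is executable from (s, u₀) in the augmented system; and in that case the final augmented state is (t, u₀ ∪ (π.map cost).toFinset), where t is the final state of executing π from s in the base system. -/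
/-- A list of actions is executable from a state. -/
def Exec {S A : Type*} (app : A → S → Prop) (succ : A → S → S) : List A → S → Prop
  | [], _ => True
  | a :: π, s => app a s ∧ Exec app succ π (succ a s)

theorem compilation_numCosts_sound_complete {S A : Type*}
    (app : A → S → Prop) (succ : A → S → S) (cost : A → ℕ) :
    ∀ (π : List A) (s : S) (u₀ : Finset ℕ),
      (Exec app succ π s ↔
        Exec (fun a (p : S × Finset ℕ) => app a p.1)
          (fun a p => (succ a p.1, insert (cost a) p.2)) π (s, u₀)) ∧
      (Exec app succ π s →
        π.foldl (fun (p : S × Finset ℕ) a => (succ a p.1, insert (cost a) p.2)) (s, u₀)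
          = (π.foldl (fun t a => succ a t) s, u₀ ∪ (π.map cost).toFinset)) := by
  intro π
  induction π with
  | nil => intro s u₀; simp [Exec]
  | cons a π ih =>
    intro s u₀
    constructor
    · simp only [Exec]
      exact and_congr Iff.rfl ((ih (succ a s) (insert (cost a) u₀)).1)
    · rintro ⟨_, hx⟩
      simp only [List.foldl, (ih (succ a s) (insert (cost a) u₀)).2 hx, List.map_cons]
      congr 1
      ext x
      simp [Finset.mem_insert, or_assoc, or_left_comm]
end

section
/- Let S and A be types with an applicability predicate app : A → S → Prop, a successor function succ : A → S → S, and a cost function cost : A → ℕ. Fix bounds minC, maxC : ℕ with minC ≤ cost a ≤ maxC for every action a. Define the augmented system on S × ℕ × ℕ by app' a (s, m, M) = app a s and succ' a (s, m, M) = (succ a s, min m (cost a), max M (cost a)). Then for every nonempty list of actions π and state s: π is executable from s in the base system if and only if π is executable from (s, maxC, minC) in the augmented system; and in that case the final augmented state is (t, m, M), where t is the final base state, m is the minimum of the list π.map cost, M is its maximum, and M − m equals the Range R(π) of the plan's cost list. -/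
/-- Maximum of a list of naturals (0 for the empty list). -/
def listMax (l : List ℕ) : ℕ := l.foldr max 0

/-- Minimum of a list of naturals (0 for the empty list). -/
def listMin : List ℕ → ℕ
  | [] => 0
  | a :: t => t.foldr min a

/-- Range of a list of naturals: max minus min. -/
def Range (l : List ℕ) : ℕ := listMax l - listMin l

/-!
The augmented system simulates the base one through the projection `(s, m, M) ↦ s`, so the two
have the same executable plans. Along a plan the trackers are the left folds of `min` and `max`
over the costs, started at `maxC` and `minC`; since these bounds are absorbed by the first cost,
the folds are exactly the minimum and the maximum of the cost list.
-/

theorem exec_comp_iff_of_semiconj {S T A : Type*} (app : A → S → Prop) (succ : A → S → S)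
    (succ' : A → T → T) (f : T → S) (hf : ∀ a p, f (succ' a p) = succ a (f p))
    (π : List A) (p : T) :
    Exec (fun a p => app a (f p)) succ' π p ↔ Exec app succ π (f p) := by
  induction π generalizing p with
  | nil => exact Iff.rfl
  | cons a π ih => simp only [Exec, ih, hf]

theorem foldl_min_eq_listMin {l : List ℕ} (hl : l ≠ []) {b : ℕ} (hb : ∀ x ∈ l, x ≤ b) :
    l.foldl min b = listMin l := by
  obtain ⟨c, t, rfl⟩ := List.exists_cons_of_ne_nil hl
  rw [List.foldl_cons, min_eq_right (hb c List.mem_cons_self), listMin, List.foldl_eq_foldr]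

theorem foldl_max_eq_listMax {l : List ℕ} (hl : l ≠ []) {b : ℕ} (hb : ∀ x ∈ l, b ≤ x) :
    l.foldl max b = listMax l := by
  obtain ⟨c, t, rfl⟩ := List.exists_cons_of_ne_nil hl
  rw [List.foldl_cons, max_eq_right (hb c List.mem_cons_self), listMax, List.foldr_cons,
    ← List.foldl_eq_foldr, ← List.foldl_assoc (op := max), max_zero]

theorem foldl_succ_min_max {S A : Type*} (succ : A → S → S) (cost : A → ℕ)
    (π : List A) (s : S) (m M : ℕ) :
    π.foldl (fun (p : S × ℕ × ℕ) a => (succ a p.1, min p.2.1 (cost a), max p.2.2 (cost a)))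
        (s, m, M)
      = (π.foldl (fun t a => succ a t) s, (π.map cost).foldl min m, (π.map cost).foldl max M) := by
  induction π generalizing s m M with
  | nil => rfl
  | cons a π ih => exact ih _ _ _

theorem compilation_range_sound_complete {S A : Type*}
    (app : A → S → Prop) (succ : A → S → S) (cost : A → ℕ)
    (minC maxC : ℕ) (hmin : ∀ a : A, minC ≤ cost a) (hmax : ∀ a : A, cost a ≤ maxC) :
    ∀ (π : List A) (s : S), π ≠ [] →
      (Exec app succ π s ↔
        Exec (fun a (p : S × ℕ × ℕ) => app a p.1)
          (fun a p => (succ a p.1, min p.2.1 (cost a), max p.2.2 (cost a)))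
          π (s, maxC, minC)) ∧
      (Exec app succ π s →
        ∃ m M : ℕ,
          π.foldl (fun (p : S × ℕ × ℕ) a =>
              (succ a p.1, min p.2.1 (cost a), max p.2.2 (cost a))) (s, maxC, minC)
            = (π.foldl (fun t a => succ a t) s, m, M)
          ∧ m = listMin (π.map cost)
          ∧ M = listMax (π.map cost)
          ∧ M - m = Range (π.map cost)) := by
  intro π s hπ
  have hcosts : π.map cost ≠ [] := mt List.map_eq_nil_iff.mp hπ
  have hm := foldl_min_eq_listMin hcosts (List.forall_mem_map.mpr fun a _ => hmax a)
  have hM := foldl_max_eq_listMax hcosts (List.forall_mem_map.mpr fun a _ => hmin a)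
  refine ⟨(exec_comp_iff_of_semiconj app succ _ Prod.fst (fun _ _ => rfl) π (s, maxC, minC)).symm,
    fun _ => ⟨_, _, foldl_succ_min_max succ cost π s maxC minC, hm, hM, ?_⟩⟩
  rw [hm, hM, Range]
end

section
/- Let S and A be types with an applicability predicate app : A → S → Prop, a successor function succ : A → S → S, and a cost function cost : A → ℕ. Fix p₀ : ℕ. Define the augmented system on S × ℕ × ℕ by app' a (s, p, m) = app a s and succ' a (s, p, m) = (succ a s, cost a, max m (Nat.dist p (cost a))). Then for every list of actions π and state s: π is executable from s in the base system if and only if π is executable from (s, p₀, 0) in the augmented system; and in that case the final augmented state is (t, p, m), where t is the final base state, p is the cost of the last action of π (or p₀ if π is empty), and m equals the Delta Δ(p₀ :: π.map cost), the maximum absolute difference between consecutive entries of the list p₀ :: π.map cost. -/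
/-- Delta of a list of naturals: maximum absolute difference between
consecutive entries (0 if fewer than two entries). -/
def Delta : List ℕ → ℕ
  | a :: b :: t => max (Nat.dist a b) (Delta (b :: t))
  | _ => 0

private lemma exec_aug {S A : Type*}
    (app : A → S → Prop) (succ : A → S → S) (cost : A → ℕ) :
    ∀ (π : List A) (s : S) (p m : ℕ),
      Exec (fun a (p : S × ℕ × ℕ) => app a p.1)
          (fun a p => (succ a p.1, cost a, max p.2.2 (Nat.dist p.2.1 (cost a))))
          π (s, p, m) ↔ Exec app succ π s := by
  intro π
  induction π with
  | nil => intro s p m; simp [Exec]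
  | cons a t ih => intro s p m; simp [Exec, ih]

private lemma fold_aug {S A : Type*}
    (succ : A → S → S) (cost : A → ℕ) :
    ∀ (π : List A) (s : S) (p m : ℕ),
      π.foldl (fun (q : S × ℕ × ℕ) a =>
            (succ a q.1, cost a, max q.2.2 (Nat.dist q.2.1 (cost a)))) (s, p, m)
        = (π.foldl (fun t a => succ a t) s,
           (π.map cost).getLastD p,
           max m (Delta (p :: π.map cost))) := by
  intro π
  induction π with
  | nil => intro s p m; simp [Delta]
  | cons a t ih =>
      intro s p m
      simp only [List.foldl_cons, List.map_cons, ih, List.getLastD_cons, Delta]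
      rw [max_assoc]

theorem compilation_delta_sound_complete {S A : Type*}
    (app : A → S → Prop) (succ : A → S → S) (cost : A → ℕ) (p₀ : ℕ) :
    ∀ (π : List A) (s : S),
      (Exec app succ π s ↔
        Exec (fun a (p : S × ℕ × ℕ) => app a p.1)
          (fun a p => (succ a p.1, cost a, max p.2.2 (Nat.dist p.2.1 (cost a))))
          π (s, p₀, 0)) ∧
      (Exec app succ π s →
        π.foldl (fun (p : S × ℕ × ℕ) a =>
            (succ a p.1, cost a, max p.2.2 (Nat.dist p.2.1 (cost a)))) (s, p₀, 0)
          = (π.foldl (fun t a => succ a t) s,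
             (π.map cost).getLastD p₀,
             Delta (p₀ :: π.map cost))) := by
  intro π s
  refine ⟨(exec_aug app succ cost π s p₀ 0).symm, fun _ => ?_⟩
  rw [fold_aug]
  simp
end

section
/- Let S and A be types with an applicability predicate app : A → S → Prop, a successor function succ : A → S → S, and a cost function cost : A → ℕ. If a list of actions π is executable from a state s with final state t, then there exists a list of actions π' executable from s with final state t such that the sequence of states visited by π' (s, the successive intermediate states, and t) has no duplicate entries, and (π'.map cost).sum ≤ (π.map cost).sum. -/
/-- If `x` is visited along an executable plan, a suffix of the plan is executable
from `x`, reaches the same final state, and is no longer / no costlier. -/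
lemma exec_suffix_of_mem_scanl {S A : Type*}
    (app : A → S → Prop) (succ : A → S → S) (cost : A → ℕ) :
    ∀ (l : List A) (t x : S), Exec app succ l t →
      x ∈ List.scanl (fun t a => succ a t) t l →
      ∃ l₂ : List A, Exec app succ l₂ x ∧
        l₂.foldl (fun t a => succ a t) x = l.foldl (fun t a => succ a t) t ∧
        l₂.length ≤ l.length ∧ (l₂.map cost).sum ≤ (l.map cost).sum := by
  intro l
  induction l with
  | nil =>
    intro t x _ hx
    simp only [List.scanl_nil, List.mem_singleton] at hx
    exact ⟨[], trivial, by simp [hx], le_refl _, le_refl _⟩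
  | cons a l ih =>
    intro t x hexec hx
    simp only [List.scanl_cons, List.singleton_append, List.mem_cons] at hx
    rcases hx with rfl | hx
    · exact ⟨a :: l, hexec, rfl, le_refl _, le_refl _⟩
    · obtain ⟨l₂, h1, h2, h3, h4⟩ := ih (succ a t) x hexec.2 hx
      refine ⟨l₂, h1, ?_, ?_, ?_⟩
      · simpa using h2
      · simpa using h3.trans (Nat.le_succ _)
      · simp only [List.map_cons, List.sum_cons]
        omega

lemma exists_simple_plan_aux {S A : Type*}
    (app : A → S → Prop) (succ : A → S → S) (cost : A → ℕ) :
    ∀ (n : ℕ) (π : List A) (s : S), π.length ≤ n → Exec app succ π s →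
    ∃ π' : List A, Exec app succ π' s ∧
      π'.foldl (fun t a => succ a t) s = π.foldl (fun t a => succ a t) s ∧
      (List.scanl (fun t a => succ a t) s π').Nodup ∧
      (π'.map cost).sum ≤ (π.map cost).sum ∧ π'.length ≤ π.length := by
  intro n
  induction n with
  | zero =>
    intro π s hlen _
    have : π = [] := List.length_eq_zero_iff.mp (Nat.le_zero.mp hlen)
    subst this
    exact ⟨[], trivial, rfl, by simp, le_refl _, le_refl _⟩
  | succ n ih =>
    intro π s hlen hexec
    match π with
    | [] => exact ⟨[], trivial, rfl, by simp, le_refl _, le_refl _⟩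
    | a :: rest =>
      have hlr : rest.length ≤ n := by simp only [List.length_cons] at hlen; omega
      obtain ⟨r', he', hf', hn', hc', hl'⟩ := ih rest (succ a s) hlr hexec.2
      by_cases hs : s ∈ List.scanl (fun t a => succ a t) (succ a s) r'
      · obtain ⟨l₂, g1, g2, g3, g4⟩ :=
          exec_suffix_of_mem_scanl app succ cost r' (succ a s) s he' hs
        obtain ⟨π'', k1, k2, k3, k4, k5⟩ :=
          ih l₂ s (g3.trans (hl'.trans hlr)) g1
        refine ⟨π'', k1, ?_, k3, ?_, ?_⟩
        · rw [k2, g2, hf']; simp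
        · simp only [List.map_cons, List.sum_cons]
          omega
        · simp only [List.length_cons]
          omega
      · refine ⟨a :: r', ⟨hexec.1, he'⟩, ?_, ?_, ?_, ?_⟩
        · simpa using hf'
        · simp only [List.scanl_cons, List.singleton_append, List.nodup_cons]
          exact ⟨hs, hn'⟩
        · simp only [List.map_cons, List.sum_cons]; omega
        · simpa using Nat.succ_le_succ hl'

theorem exists_simple_plan_of_plan {S A : Type*}
    (app : A → S → Prop) (succ : A → S → S) (cost : A → ℕ)
    (π : List A) (s : S) (hexec : Exec app succ π s) :
    ∃ π' : List A, Exec app succ π' s ∧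
      π'.foldl (fun t a => succ a t) s = π.foldl (fun t a => succ a t) s ∧
      (List.scanl (fun t a => succ a t) s π').Nodup ∧
      (π'.map cost).sum ≤ (π.map cost).sum := by
  obtain ⟨π', h1, h2, h3, h4, _⟩ :=
    exists_simple_plan_aux app succ cost π.length π s (le_refl _) hexec
  exact ⟨π', h1, h2, h3, h4⟩
end

section
/- There exist nonempty lists u, v, w of natural numbers such that Δ(u) < Δ(v) but Δ(u ++ w) > Δ(v ++ w), where Δ(l) denotes the Delta of the list l. Hence the Delta dispersion metric is not strictly isotone under plan concatenation. (For example u = [5,5], v = [0,1], w = [0]: Δ(u) = 0 < 1 = Δ(v), while Δ(u ++ w) = 5 > 1 = Δ(v ++ w).) -/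
theorem delta_not_strictly_isotone :
    ∃ u v w : List ℕ, u ≠ [] ∧ v ≠ [] ∧ w ≠ [] ∧
      Delta u < Delta v ∧ Delta (u ++ w) > Delta (v ++ w) := by
  exact ⟨[5,5], [0,1], [0], by simp, by simp, by simp, by decide, by decide⟩
end
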